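/- Let ν > 0, k > 0, and let r_{ν,k} be as defined. Then lim_{t→∞} t^{ν+1}·r_{ν,k}(t) = k²/(2^{ν+1}·(ν+1)·Γ(ν)), i.e. r_{ν,k}(t) ∼ C/t^{ν+1} as t → ∞ with C = k²/(2^{ν+1}(ν+1)Γ(ν)). -/

import Mathlib

open MeasureTheory Real Filter Set Topology

/-- The modified Bessel function of the first kind, defined by its series:
`I_ν(y) = Σ_{j=0}^∞ (y/2)^{ν+2j} / (j!·Γ(ν+j+1))`. -/
noncomputable def besselI (ν y : ℝ) : ℝ :=
  ∑' j : ℕ, (y / 2) ^ (ν + 2 * (j : ℝ)) / ((Nat.factorial j : ℝ) * Real.Gamma (ν + (j : ℝ) + 1))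

/-- The explicit integral formula for the Bessel(δ) call price, `δ = 2ν+2`, strike `K = k^{−2ν}`:
`r_{ν,k}(t) = ν·k^{−ν}·∫_0^{k/t} y^{−1}·e^{−y/(2k)}·[ y^ν/(2^ν Γ(1+ν)) − e^{−ky/2}·I_ν(y) ] dy`. -/
noncomputable def rBes (ν k t : ℝ) : ℝ :=
  ν * k ^ (-ν) *
    ∫ y in (0:ℝ)..(k / t),
      y⁻¹ * Real.exp (-y / (2 * k)) *
        (y ^ ν / ((2:ℝ) ^ ν * Real.Gamma (1 + ν)) - Real.exp (-(k * y) / 2) * besselI ν y)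

/-! Write `I_ν(y) = (y/2)^ν g(y²/4)` with `g` the entire function `∑ x^j / (j! Γ(ν+j+1))`
(`besselIEntire`).
Then the integrand of `rBes` is `e^{-y/(2k)} (y/2)^ν H(y) / y` with
`H(y) = g(0) - e^{-ky/2} g(y²/4)` (`rBesBracket`), and `H` is differentiable with `H(0) = 0`,
`H'(0) = k g(0) / 2 = k / (2 Γ(ν+1))`. Hence the integrand is `~ k y^ν / (2^{ν+1} Γ(ν+1))` as
`y → 0+`, by L'Hôpital its integral over `[0, u]` is `~ k u^{ν+1} / (2^{ν+1} (ν+1) Γ(ν+1))`,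
and `u = k/t` gives the limit, using `ν Γ(ν) = Γ(ν+1)`. -/

open FormalMultilinearSeries

noncomputable def besselICoeff (ν : ℝ) (j : ℕ) : ℝ :=
  1 / ((j.factorial : ℝ) * Gamma (ν + j + 1))

noncomputable def besselIEntire (ν : ℝ) : ℝ → ℝ := ofScalarsSum (besselICoeff ν)

lemma besselICoeff_succ_div {ν : ℝ} {n : ℕ} (hn : 0 < ν + n + 1) :
    besselICoeff ν (n + 1) / besselICoeff ν n = ((n + 1) * (ν + n + 1))⁻¹ := by
  have : Gamma (ν + n + 1) ≠ 0 := (Gamma_pos_of_pos hn).ne'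
  rw [besselICoeff, besselICoeff, Nat.factorial_succ, Nat.cast_mul, Nat.cast_succ,
    show ν + (n + 1) + 1 = (ν + n + 1) + 1 by ring, Gamma_add_one hn.ne']
  have : (n.factorial : ℝ) ≠ 0 := by positivity
  field_simp

lemma radius_ofScalars_besselICoeff (ν : ℝ) : (ofScalars ℝ (besselICoeff ν)).radius = ⊤ := by
  have hpos : ∀ᶠ n : ℕ in atTop, 0 < ν + n + 1 :=
    ((tendsto_natCast_atTop_atTop (R := ℝ)).eventually_gt_atTop (-ν - 1)).mono
      fun n hn => by linarith
  refine ofScalars_radius_eq_top_of_tendsto ℝ _ (hpos.mono fun n hn => ?_) ?_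
  · exact one_div_ne_zero (mul_ne_zero (by positivity) (Gamma_pos_of_pos hn).ne')
  · have hprod : Tendsto (fun n : ℕ => ((n : ℝ) + 1) * (ν + n + 1)) atTop atTop := by
      exact (tendsto_atTop_add_const_right _ 1 tendsto_natCast_atTop_atTop).atTop_mul_atTop₀
        (tendsto_atTop_add_const_right _ 1
          (tendsto_atTop_add_const_left _ ν tendsto_natCast_atTop_atTop))
    refine (tendsto_inv_atTop_zero.comp hprod).congr' (hpos.mono fun n hn => ?_)
    dsimp only [Function.comp_apply]
    rw [Nat.succ_eq_add_one, ← norm_div, besselICoeff_succ_div hn, norm_inv,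
      Real.norm_of_nonneg (by positivity)]

lemma analyticAt_besselIEntire (ν x : ℝ) : AnalyticAt ℝ (besselIEntire ν) x :=
  ((ofScalars ℝ (besselICoeff ν)).hasFPowerSeriesOnBall
    (by simp [radius_ofScalars_besselICoeff])).analyticAt_of_mem
    (by simp [radius_ofScalars_besselICoeff])

lemma besselIEntire_zero (ν : ℝ) : besselIEntire ν 0 = 1 / Gamma (ν + 1) := by
  simp [besselIEntire, besselICoeff]

lemma besselI_eq_rpow_mul_besselIEntire (ν : ℝ) {y : ℝ} (hy : 0 < y) :
    besselI ν y = (y / 2) ^ ν * besselIEntire ν ((y / 2) ^ 2) := by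
  rw [besselI, besselIEntire, ofScalars_sum_eq, ← tsum_mul_left]
  refine tsum_congr fun j => ?_
  rw [rpow_add (by positivity), rpow_mul (by positivity), rpow_natCast, rpow_two, besselICoeff,
    smul_eq_mul]
  ring

lemma tendsto_rpow_nhdsGT_zero {p : ℝ} (hp : 0 < p) :
    Tendsto (fun y : ℝ => y ^ p) (𝓝[>] 0) (𝓝 0) := by
  simpa [zero_rpow hp.ne'] using
    ((continuousAt_rpow_const 0 p (Or.inr hp.le)).tendsto).mono_left nhdsWithin_le_nhds

theorem tendsto_integral_div_rpow_nhdsGT_zero {f : ℝ → ℝ} {p L : ℝ} (hp : -1 < p)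
    (hf : ContinuousOn f (Ici 0)) (hlim : Tendsto (fun y => f y / y ^ p) (𝓝[>] 0) (𝓝 L)) :
    Tendsto (fun u => (∫ y in 0..u, f y) / u ^ (p + 1)) (𝓝[>] 0) (𝓝 (L / (p + 1))) := by
  have hp1 : 0 < p + 1 := by linarith
  have hprim : ∀ x ∈ Ioo (0 : ℝ) 1, HasDerivAt (fun u => ∫ y in 0..u, f y) (f x) x := fun x hx =>
    intervalIntegral.integral_hasDerivAt_right
      (hf.mono (by simp [uIcc_of_le hx.1.le, Icc_subset_Ici_self])).intervalIntegrable
      ((hf.mono Ioi_subset_Ici_self).stronglyMeasurableAtFilter isOpen_Ioi x hx.1)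
      (hf.continuousAt (Ici_mem_nhds hx.1))
  have hpow : ∀ x ∈ Ioo (0 : ℝ) 1, HasDerivAt (fun u => u ^ (p + 1)) ((p + 1) * x ^ p) x :=
    fun x hx => by simpa using hasDerivAt_rpow_const (p := p + 1) (Or.inl hx.1.ne')
  have hprim_zero : Tendsto (fun u => ∫ y in 0..u, f y) (𝓝[>] 0) (𝓝 0) := by
    have := (intervalIntegral.integral_hasDerivWithinAt_right (a := 0) (b := 0) (s := Ici 0)
      (t := Ioi 0) (by simp)
      ((hf.mono Ioi_subset_Ici_self).stronglyMeasurableAtFilter_nhdsWithin measurableSet_Ioi 0)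
      ((hf 0 self_mem_Ici).mono Ioi_subset_Ici_self)).continuousWithinAt.tendsto
    simpa using this.mono_left (nhdsWithin_mono _ Ioi_subset_Ici_self)
  refine HasDerivAt.lhopital_zero_right_on_Ioo zero_lt_one hprim hpow
    (fun x hx => by have := hx.1; positivity) hprim_zero (tendsto_rpow_nhdsGT_zero hp1) ?_
  exact (hlim.div_const (p + 1)).congr fun y => by rw [div_div, mul_comm]

noncomputable def rBesBracket (ν k y : ℝ) : ℝ :=
  1 / Gamma (ν + 1) - exp (-(k * y) / 2) * besselIEntire ν ((y / 2) ^ 2)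

lemma differentiable_rBesBracket (ν k : ℝ) : Differentiable ℝ (rBesBracket ν k) := fun y =>
  ((differentiableAt_const _).sub (((differentiableAt_id.const_mul k).neg.div_const 2).exp.mul
    ((analyticAt_besselIEntire ν _).differentiableAt.comp y
      ((differentiableAt_id.div_const 2).pow 2))))

lemma hasDerivAt_rBesBracket_zero (ν k : ℝ) :
    HasDerivAt (rBesBracket ν k) (k / (2 * Gamma (ν + 1))) 0 := by
  have hexp : HasDerivAt (fun y => exp (-(k * y) / 2)) (-k / 2) 0 := by
    simpa using ((hasDerivAt_id (0 : ℝ)).const_mul k).neg.div_const 2 |>.exp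
  have hsq : HasDerivAt (fun y : ℝ => (y / 2) ^ 2) 0 0 := by
    simpa using ((hasDerivAt_id' (0 : ℝ)).div_const 2).fun_pow 2
  have hg := (analyticAt_besselIEntire ν _).differentiableAt.hasDerivAt.comp (0 : ℝ) hsq
  have h : HasDerivAt (rBesBracket ν k) _ 0 := (hexp.fun_mul hg).const_sub (1 / Gamma (ν + 1))
  convert h using 1
  simp [besselIEntire_zero]
  ring

lemma tendsto_rBesBracket_div (ν k : ℝ) :
    Tendsto (fun y => rBesBracket ν k y / y) (𝓝[>] 0) (𝓝 (k / (2 * Gamma (ν + 1)))) := by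
  have := hasDerivAt_iff_tendsto_slope_zero.1 (hasDerivAt_rBesBracket_zero ν k)
  refine (this.mono_left (nhdsWithin_mono _ fun y hy => ne_of_gt hy)).congr fun y => ?_
  simp [rBesBracket, besselIEntire_zero, div_eq_inv_mul]

noncomputable def rBesIntegrand (ν k y : ℝ) : ℝ :=
  y⁻¹ * exp (-y / (2 * k)) *
    (y ^ ν / ((2:ℝ) ^ ν * Gamma (1 + ν)) - exp (-(k * y) / 2) * besselI ν y)

lemma rBes_eq_integral_rBesIntegrand (ν k t : ℝ) :
    rBes ν k t = ν * k ^ (-ν) * ∫ y in 0..k / t, rBesIntegrand ν k y := rfl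

lemma rBesIntegrand_eq (ν k : ℝ) {y : ℝ} (hy : 0 < y) :
    rBesIntegrand ν k y = exp (-y / (2 * k)) * (y / 2) ^ ν * (rBesBracket ν k y / y) := by
  rw [rBesIntegrand, rBesBracket, besselI_eq_rpow_mul_besselIEntire ν hy,
    div_rpow hy.le zero_le_two, add_comm 1 ν]
  ring

lemma tendsto_rBesIntegrand_div_rpow (ν k : ℝ) :
    Tendsto (fun y => rBesIntegrand ν k y / y ^ ν) (𝓝[>] 0)
      (𝓝 (k / (2 ^ (ν + 1) * Gamma (ν + 1)))) := by
  have hexp : Tendsto (fun y => exp (-y / (2 * k))) (𝓝[>] 0) (𝓝 1) :=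
    ((by fun_prop : Continuous fun y : ℝ => exp (-y / (2 * k))).tendsto' 0 1
      (by simp)).mono_left nhdsWithin_le_nhds
  have hlim : k / (2 ^ (ν + 1) * Gamma (ν + 1)) = 1 * (k / (2 * Gamma (ν + 1))) / 2 ^ ν := by
    rw [rpow_add_one two_ne_zero]
    ring
  rw [hlim]
  refine ((hexp.mul (tendsto_rBesBracket_div ν k)).div_const (2 ^ ν)).congr' ?_
  filter_upwards [self_mem_nhdsWithin] with y (hy : 0 < y)
  have : y ^ ν ≠ 0 := by positivity
  rw [rBesIntegrand_eq ν k hy, div_rpow hy.le zero_le_two]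
  field_simp

lemma continuousOn_rBesIntegrand {ν : ℝ} (hν : 0 < ν) (k : ℝ) :
    ContinuousOn (rBesIntegrand ν k) (Ici 0) := by
  rintro y (hy : 0 ≤ y)
  rcases hy.eq_or_lt with rfl | hy
  -- the junk value `0⁻¹ = 0` makes `rBesIntegrand ν k 0 = 0`, the limit from the right
  · rw [← continuousWithinAt_Ioi_iff_Ici, ContinuousWithinAt, show rBesIntegrand ν k 0 = 0 by
      simp [rBesIntegrand]]
    have := (tendsto_rBesIntegrand_div_rpow ν k).mul (tendsto_rpow_nhdsGT_zero hν)
    rw [mul_zero] at this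
    refine this.congr' ?_
    filter_upwards [self_mem_nhdsWithin] with y (hy : 0 < y)
    exact div_mul_cancel₀ _ (by positivity)
  · have hcont : ContinuousAt (fun y => exp (-y / (2 * k)) * (y / 2) ^ ν * (rBesBracket ν k y / y))
        y := by
      have := (differentiable_rBesBracket ν k).continuous.continuousAt (x := y)
      have := continuousAt_rpow_const (y / 2) ν (Or.inl (by positivity))
      fun_prop (disch := positivity)
    refine (hcont.congr ?_).continuousWithinAt
    filter_upwards [Ioi_mem_nhds hy] with z hz
    exact (rBesIntegrand_eq ν k hz).symm

theorem stmt_8 (ν k : ℝ) (hν : 0 < ν) (hk : 0 < k) :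
    Filter.Tendsto (fun t : ℝ => t ^ (ν + 1) * rBes ν k t) Filter.atTop
      (nhds (k ^ 2 / ((2:ℝ) ^ (ν + 1) * (ν + 1) * Real.Gamma ν))) := by
  have hkt : Tendsto (fun t => k / t) atTop (𝓝[>] 0) := by
    simpa [div_eq_mul_inv] using TendstoNhdsWithinIoi.const_mul hk tendsto_inv_atTop_nhdsGT_zero
  have hlim := ((tendsto_integral_div_rpow_nhdsGT_zero (by linarith)
    (continuousOn_rBesIntegrand hν k) (tendsto_rBesIntegrand_div_rpow ν k)).comp hkt).const_mul
    (ν * k)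
  have hval : ν * k * (k / (2 ^ (ν + 1) * Gamma (ν + 1)) / (ν + 1))
      = k ^ 2 / (2 ^ (ν + 1) * (ν + 1) * Gamma ν) := by
    rw [Gamma_add_one hν.ne']
    field_simp
  rw [hval] at hlim
  refine hlim.congr' ?_
  filter_upwards [eventually_gt_atTop 0] with t ht
  rw [Function.comp_apply, rBes_eq_integral_rBesIntegrand, div_rpow hk.le ht.le, rpow_neg hk.le, rpow_add_one hk.ne']
  field_simp
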